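/- Let M be a symmetric n×n matrix over GF(2) (n ≥ 2) and let a ≠ b be indices with M_{aa} = 0, M_{bb} = 0 and M_{ab} = 1. Let M′ be the (n−2)×(n−2) matrix indexed by the indices x, y distinct from a and b whose (x,y) entry is M_{xy} + M_{xa}·M_{yb} + M_{xb}·M_{ya}. Then rank(M) = rank(M′) + 2; equivalently, M and M′ have the same nullity over GF(2). -/

import Mathlib

open Matrix BigOperators

/-- The graph bracket polynomial of a looped graph specified by its Boolean
adjacency matrix `M` over `GF(2)`:
`[G](A,B,d) = ∑_Δ A^{ν(Δ)} B^{ρ(Δ)} d^{ν(M+Δ)}`, the sum over all diagonal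
matrices `Δ` over `GF(2)` (encoded by their diagonal functions `f`). -/
noncomputable def gBracket {V : Type*} [Fintype V] [DecidableEq V] {K : Type*} [CommRing K]
    (M : Matrix V V (ZMod 2)) (A B d : K) : K :=
  ∑ f : V → ZMod 2,
    A ^ (Fintype.card V - (Matrix.diagonal f).rank)
      * B ^ (Matrix.diagonal f).rank
      * d ^ (Fintype.card V - (M + Matrix.diagonal f).rank)

/-!
After listing `a, b` first, `M` becomes a block matrix whose `{a, b}` corner is the involution
`!![0, 1; 1, 0]`. Block elimination against this invertible corner shows that `rank M` is `2` plus
the rank of the Schur complement `D - C P⁻¹ B`, and since `P⁻¹ = P` and `M` is symmetric the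
complement has entries `M x y - M x a * M y b - M x b * M y a`: over GF(2) this is the pivot minor.
-/

theorem Submodule.finrank_prod {K V W : Type*} [DivisionRing K] [AddCommGroup V] [Module K V]
    [AddCommGroup W] [Module K W] [FiniteDimensional K V] [FiniteDimensional K W]
    (p : Submodule K V) (q : Submodule K W) :
    Module.finrank K (p.prod q) = Module.finrank K p + Module.finrank K q := by
  rw [← Module.finrank_prod]
  exact LinearEquiv.finrank_eq
    { toFun := fun x => (⟨x.1.1, x.2.1⟩, ⟨x.1.2, x.2.2⟩)
      invFun := fun x => ⟨(x.1.1, x.2.1), x.1.2, x.2.2⟩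
      map_add' := fun _ _ => rfl
      map_smul' := fun _ _ => rfl }

namespace Equiv

variable {α : Type*} [DecidableEq α] {a b : α}

noncomputable def finTwoSumCompl (hab : a ≠ b) : Fin 2 ⊕ {z : α // z ≠ a ∧ z ≠ b} ≃ α :=
  ofBijective (Sum.elim ![a, b] Subtype.val) <| by
    constructor
    · rintro (i | x) (j | y) h
      · fin_cases i <;> fin_cases j <;> simp_all
      · fin_cases i <;> simp at h <;> [exact absurd h.symm y.2.1; exact absurd h.symm y.2.2]
      · fin_cases j <;> simp at h <;> [exact absurd h x.2.1; exact absurd h x.2.2]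
      · exact congrArg Sum.inr (Subtype.ext h)
    · intro z
      by_cases hza : z = a
      · exact ⟨Sum.inl 0, by simp [hza]⟩
      by_cases hzb : z = b
      · exact ⟨Sum.inl 1, by simp [hzb]⟩
      · exact ⟨Sum.inr ⟨z, hza, hzb⟩, rfl⟩

@[simp]
theorem finTwoSumCompl_inl (hab : a ≠ b) (i : Fin 2) : finTwoSumCompl hab (.inl i) = ![a, b] i :=
  rfl

@[simp]
theorem finTwoSumCompl_inr (hab : a ≠ b) (x : {z : α // z ≠ a ∧ z ≠ b}) :
    finTwoSumCompl hab (.inr x) = x :=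
  rfl

end Equiv

namespace Matrix

variable {K l m : Type*} [Fintype l] [Fintype m]

theorem mulVecLin_fromBlocks_zero [CommSemiring K] (A : Matrix l l K) (D : Matrix m m K) :
    (fromBlocks A 0 0 D).mulVecLin =
      ((LinearEquiv.sumArrowLequivProdArrow l m K K).symm.toLinearMap ∘ₗ
        A.mulVecLin.prodMap D.mulVecLin) ∘ₗ
          (LinearEquiv.sumArrowLequivProdArrow l m K K).toLinearMap := by
  refine LinearMap.ext fun v => ?_
  simp only [LinearMap.comp_apply, mulVecLin_apply, fromBlocks_mulVec, zero_mulVec, add_zero,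
    zero_add]
  rfl

theorem rank_fromBlocks_zero [Field K] (A : Matrix l l K) (D : Matrix m m K) :
    (fromBlocks A 0 0 D).rank = A.rank + D.rank := by
  rw [rank, mulVecLin_fromBlocks_zero, LinearMap.range_comp_of_range_eq_top _ (LinearEquiv.range _),
    LinearMap.range_comp, LinearEquiv.finrank_map_eq, LinearMap.range_prodMap,
    Submodule.finrank_prod, rank, rank]

theorem rank_fromBlocks_of_invertible₁₁ [Field K] [DecidableEq l] [DecidableEq m]
    (A : Matrix l l K) (B : Matrix l m K) (C : Matrix m l K) (D : Matrix m m K) [Invertible A] :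
    (fromBlocks A B C D).rank = A.rank + (D - C * ⅟A * B).rank := by
  rw [fromBlocks_eq_of_invertible₁₁, rank_mul_eq_left_of_isUnit_det,
    rank_mul_eq_right_of_isUnit_det, rank_fromBlocks_zero]
  · simp
  · simp

instance invertibleSwapFinTwo [Ring K] : Invertible !![(0 : K), 1; 1, 0] :=
  have h : !![(0 : K), 1; 1, 0] * !![0, 1; 1, 0] = 1 := by
    ext i j; fin_cases i <;> fin_cases j <;> simp
  ⟨_, h, h⟩

theorem rank_eq_rank_pivot_add_two {α : Type*} [Field K] [Fintype α] [DecidableEq α]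
    (M : Matrix α α K) (hM : M.IsSymm) {a b : α} (hab : a ≠ b)
    (haa : M a a = 0) (hbb : M b b = 0) (hab1 : M a b = 1) :
    M.rank = (of fun x y : {z : α // z ≠ a ∧ z ≠ b} =>
      M x y - M x a * M y b - M x b * M y a).rank + 2 := by
  have hsymm : ∀ x y, M x y = M y x := fun x y => hM.apply y x
  set e := Equiv.finTwoSumCompl hab
  have hblocks : M.submatrix e e = fromBlocks !![0, 1; 1, 0]
      (of fun i y => M (![a, b] i) y.1) (of fun x j => M x.1 (![a, b] j))
      (M.submatrix Subtype.val Subtype.val) := by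
    ext (i | x) (j | y)
    · fin_cases i <;> fin_cases j <;> simp [e, haa, hbb, hab1, hsymm b a]
    all_goals rfl
  have hswap : (!![(0 : K), 1; 1, 0]).rank = 2 := by
    simp [rank_of_isUnit _ (isUnit_of_invertible _)]
  rw [← rank_submatrix M e e, hblocks, rank_fromBlocks_of_invertible₁₁, hswap, add_comm]
  congr 2
  ext x y
  rw [show ⅟!![(0 : K), 1; 1, 0] = !![0, 1; 1, 0] from rfl]
  simp only [sub_apply, submatrix_apply, mul_apply, of_apply, Fin.sum_univ_two, cons_val_zero,
    cons_val_one, cons_val_fin_one, mul_zero, mul_one, zero_add, add_zero, hsymm a y.1, hsymm b y.1]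
  ring

end Matrix

theorem rank_pivot_minor_general {n : ℕ}
    (M : Matrix (Fin n) (Fin n) (ZMod 2)) (hsym : M.IsSymm)
    (a b : Fin n) (hab : a ≠ b)
    (haa : M a a = 0) (hbb : M b b = 0) (hMab : M a b = 1) :
    M.rank =
        (Matrix.of fun x y : {z : Fin n // z ≠ a ∧ z ≠ b} =>
          M x.1 y.1 + M x.1 a * M y.1 b + M x.1 b * M y.1 a).rank + 2 ∧
    n - M.rank =
      (n - 2) -
        (Matrix.of fun x y : {z : Fin n // z ≠ a ∧ z ≠ b} =>
          M x.1 y.1 + M x.1 a * M y.1 b + M x.1 b * M y.1 a).rank := by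
  have hrank := M.rank_eq_rank_pivot_add_two hsym hab haa hbb hMab
  simp only [CharTwo.sub_eq_add] at hrank
  have hle : M.rank ≤ n := by simpa using M.rank_le_card_width
  exact ⟨hrank, by omega⟩

/-- If `M` is symmetric over `GF(2)` with `M a a = M b b = 0` and `M a b = 1`
(`a ≠ b`), and `M'` is the pivot minor with entries
`M x y + M x a · M y b + M x b · M y a` (for `x, y ∉ {a,b}`), then
`rank M = rank M' + 2`; equivalently `M` and `M'` have the same nullity. -/
theorem rank_pivot_minor {n : ℕ} (hn : 2 ≤ n)
    (M : Matrix (Fin n) (Fin n) (ZMod 2)) (hsym : M.IsSymm)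
    (a b : Fin n) (hab : a ≠ b)
    (haa : M a a = 0) (hbb : M b b = 0) (hMab : M a b = 1) :
    M.rank =
        (Matrix.of fun x y : {z : Fin n // z ≠ a ∧ z ≠ b} =>
          M x.1 y.1 + M x.1 a * M y.1 b + M x.1 b * M y.1 a).rank + 2 ∧
    n - M.rank =
      (n - 2) -
        (Matrix.of fun x y : {z : Fin n // z ≠ a ∧ z ≠ b} =>
          M x.1 y.1 + M x.1 a * M y.1 b + M x.1 b * M y.1 a).rank :=
  rank_pivot_minor_general M hsym a b hab haa hbb hMab
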